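/- arXiv:2211.15347 — 2 statements merged into one kernel-verified Lean document; each statement's English description precedes it below -/
import Mathlib

section
/- Recursive least-squares update equation: Let φ(0), …, φ(k−1) be column vectors in ℝⁿ and y(1), …, y(k) real numbers with k ≥ 2. Suppose both M(k−1) = Σ_{j=1}^{k−1} φ(j−1) φ(j−1)ᵀ and M(k) = Σ_{j=1}^{k} φ(j−1) φ(j−1)ᵀ are invertible, and set F(k) = M(k)⁻¹, θ̂(k−1) = M(k−1)⁻¹ Σ_{j=1}^{k−1} φ(j−1) y(j), and θ̂(k) = M(k)⁻¹ Σ_{j=1}^{k} φ(j−1) y(j). Then θ̂(k) = θ̂(k−1) + F(k) φ(k−1) (y(k) − φ(k−1)ᵀ θ̂(k−1)). -/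
open Matrix

/-! If `P θ = b` and `M = P + u vᵀ`, then `M θ = b + (vᵀθ) u`, so `b + c u = M θ + (c − vᵀθ) u`;
applying `M⁻¹` gives the update. For least squares `P = M(k−1)`, `u = v = φ(k−1)`,
`b = Σ_{j<k} φ(j−1) y(j)` and `c = y(k)`. -/

section RankOneUpdate

variable {m K : Type*} [Fintype m] [CommRing K]

theorem add_vecMulVec_mulVec (P : Matrix m m K) (u v θ : m → K) :
    (P + vecMulVec u v) *ᵥ θ = P *ᵥ θ + (v ⬝ᵥ θ) • u := by
  rw [add_mulVec, vecMulVec_mulVec, op_smul_eq_smul]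

variable [DecidableEq m]

theorem mulVec_eq_of_eq_inv_mulVec {M : Matrix m m K} (hM : IsUnit M) {θ b : m → K}
    (hθ : θ = M⁻¹ *ᵥ b) : M *ᵥ θ = b := by
  rw [hθ, mulVec_mulVec, mul_nonsing_inv M ((isUnit_iff_isUnit_det M).mp hM), one_mulVec]

theorem inv_add_vecMulVec_mulVec_add_smul {P : Matrix m m K} {u v θ b : m → K} (c : K)
    (hθ : P *ᵥ θ = b) (hM : IsUnit (P + vecMulVec u v)) :
    (P + vecMulVec u v)⁻¹ *ᵥ (b + c • u) =
      θ + (c - v ⬝ᵥ θ) • ((P + vecMulVec u v)⁻¹ *ᵥ u) := by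
  have hsplit : b + c • u = (P + vecMulVec u v) *ᵥ θ + (c - v ⬝ᵥ θ) • u := by
    rw [add_vecMulVec_mulVec, hθ]
    module
  rw [hsplit, mulVec_add, mulVec_mulVec, nonsing_inv_mul _ ((isUnit_iff_isUnit_det _).mp hM),
    one_mulVec, mulVec_smul]

end RankOneUpdate

/-- **Recursive least-squares update.** With `M(k−1) = Σ_{j=1}^{k−1} φ(j−1)φ(j−1)ᵀ` and
`M(k) = Σ_{j=1}^{k} φ(j−1)φ(j−1)ᵀ` both invertible, `F(k) = M(k)⁻¹`,
`θ̂(k−1) = M(k−1)⁻¹ Σ_{j=1}^{k−1} φ(j−1)y(j)` and `θ̂(k) = M(k)⁻¹ Σ_{j=1}^{k} φ(j−1)y(j)`,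
one has `θ̂(k) = θ̂(k−1) + F(k) φ(k−1) (y(k) − φ(k−1)ᵀ θ̂(k−1))`. -/
theorem recursive_least_squares_update {n k : ℕ} (hk : 2 ≤ k)
    (φ : ℕ → Fin n → ℝ) (y : ℕ → ℝ)
    (Mprev M F : Matrix (Fin n) (Fin n) ℝ)
    (hMprev : Mprev = ∑ j ∈ Finset.range (k-1), Matrix.vecMulVec (φ j) (φ j))
    (hM : M = ∑ j ∈ Finset.range k, Matrix.vecMulVec (φ j) (φ j))
    (hMprevU : IsUnit Mprev) (hMU : IsUnit M)
    (hF : F = M⁻¹)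
    (θprev θcur : Fin n → ℝ)
    (hθprev : θprev = Mprev⁻¹ *ᵥ ∑ j ∈ Finset.range (k-1), y (j+1) • φ j)
    (hθcur : θcur = M⁻¹ *ᵥ ∑ j ∈ Finset.range k, y (j+1) • φ j) :
    θcur = θprev + (y k - φ (k-1) ⬝ᵥ θprev) • (F *ᵥ φ (k-1)) := by
  obtain ⟨i, rfl⟩ : ∃ i, k = i + 1 := ⟨k - 1, by omega⟩
  simp only [Nat.add_sub_cancel] at *
  rw [Finset.sum_range_succ, ← hMprev] at hM
  rw [Finset.sum_range_succ] at hθcur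
  subst hM hF hθcur
  exact inv_add_vecMulVec_mulVec_add_smul (y (i + 1))
    (mulVec_eq_of_eq_inv_mulVec hMprevU hθprev) hMU
end

section
/- Strict decrease of the gain-matrix trace in recursive least squares: Let F be a symmetric positive definite n×n real matrix and φ a nonzero column vector in ℝⁿ. Then 1 + φᵀ F φ > 0 and tr[(F⁻¹ + φ φᵀ)⁻¹] < tr[F]. -/
open Matrix

/-! By the Sherman–Morrison formula, `(F⁻¹ + φφᵀ)⁻¹ = F - (Fφ)(Fφ)ᵀ / (1 + φᵀFφ)` (using `Fᵀ = F`),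
so the trace drops by `‖Fφ‖² / (1 + φᵀFφ)`, which is positive because `φᵀFφ > 0` forces `Fφ ≠ 0`. -/

namespace Matrix

variable {n K : Type*} [Fintype n] [DecidableEq n] [Field K]

theorem add_vecMulVec_inv_eq_sub {A : Matrix n n K} (hA : IsUnit A) (u v : n → K)
    (hs : 1 + v ⬝ᵥ (A⁻¹ *ᵥ u) ≠ 0) :
    (A + vecMulVec u v)⁻¹ =
      A⁻¹ - (1 + v ⬝ᵥ (A⁻¹ *ᵥ u))⁻¹ • vecMulVec (A⁻¹ *ᵥ u) (v ᵥ* A⁻¹) := by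
  have hdet : IsUnit A.det := (isUnit_iff_isUnit_det A).mp hA
  set c := (1 + v ⬝ᵥ (A⁻¹ *ᵥ u))⁻¹
  have hc : 1 - c * (1 + v ⬝ᵥ (A⁻¹ *ᵥ u)) = 0 := by rw [inv_mul_cancel₀ hs, sub_self]
  refine inv_eq_right_inv ?_
  rw [add_mul, mul_sub, mul_sub, mul_nonsing_inv A hdet, Matrix.mul_smul, Matrix.mul_smul,
    mul_vecMulVec, mulVec_mulVec, mul_nonsing_inv A hdet, one_mulVec, vecMulVec_mul,
    vecMulVec_mul_vecMulVec, vecMulVec_smul, smul_smul]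
  calc (1 : Matrix n n K) - c • vecMulVec u (v ᵥ* A⁻¹) +
        (vecMulVec u (v ᵥ* A⁻¹) - (c * (v ⬝ᵥ (A⁻¹ *ᵥ u))) • vecMulVec u (v ᵥ* A⁻¹))
      = 1 + (1 - c * (1 + v ⬝ᵥ (A⁻¹ *ᵥ u))) • vecMulVec u (v ᵥ* A⁻¹) := by
        rw [mul_add, mul_one, sub_add_eq_sub_sub, sub_smul, sub_smul, one_smul]; abel
    _ = 1 := by rw [hc, zero_smul, add_zero]

end Matrix

/-- **Strict decrease of the RLS gain-matrix trace.** If `F` is a symmetric positive definite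
n×n real matrix and `φ ∈ ℝⁿ` is nonzero, then `1 + φᵀ F φ > 0` and
`tr[(F⁻¹ + φφᵀ)⁻¹] < tr[F]`. -/
theorem rls_gain_trace_strict_decrease {n : ℕ}
    (F : Matrix (Fin n) (Fin n) ℝ) (hF : F.PosDef)
    (φ : Fin n → ℝ) (hφ : φ ≠ 0) :
    0 < 1 + φ ⬝ᵥ (F *ᵥ φ) ∧
      ((F⁻¹ + Matrix.vecMulVec φ φ)⁻¹).trace < F.trace := by
  have hquad : 0 < φ ⬝ᵥ (F *ᵥ φ) := by simpa using hF.dotProduct_mulVec_pos hφ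
  have hden : 0 < 1 + φ ⬝ᵥ (F *ᵥ φ) := by linarith
  refine ⟨hden, ?_⟩
  have hFinv : F⁻¹⁻¹ = F := nonsing_inv_nonsing_inv F ((isUnit_iff_isUnit_det F).mp hF.isUnit)
  have hsymm : φ ᵥ* F = F *ᵥ φ := by
    rw [← vecMul_transpose, ← conjTranspose_eq_transpose_of_trivial, hF.isHermitian.eq]
  have hFφ : F *ᵥ φ ≠ 0 := fun h => by simp [h] at hquad
  have hnorm : 0 < (F *ᵥ φ) ⬝ᵥ (F *ᵥ φ) := by simpa using dotProduct_star_self_pos_iff.mpr hFφ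
  rw [add_vecMulVec_inv_eq_sub (isUnit_nonsing_inv_iff.mpr hF.isUnit) φ φ
      (by rw [hFinv]; exact hden.ne'),
    hFinv, hsymm, trace_sub, trace_smul, trace_vecMulVec, smul_eq_mul, sub_lt_self_iff]
  positivity
end
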